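/- With M_φ = ∏_{j=1}^N (cos φ · X_j + sin φ · Y_j) and φ_k = kπ/N, the alternating average (1/N) ∑_{k=1}^N (-1)^k M_{φ_k} equals χ = |0…0⟩⟨1…1| + |1…1⟩⟨0…0|. -/

import Mathlib

/-!
On one qubit, `cos φ X + sin φ Y = X · diag(e^{iφ}, e^{-iφ})`, and the Kronecker product over the
qubits is multiplicative, so `M_φ = X^{⊗N} D_φ` where `D_φ` is diagonal with entry `e^{iφ(2m - N)}`
on a basis state with `m` zeros. Spreading `(-1)^k = e^{ikπ}` over the `N` qubits turns the `k`-th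
term of the alternating sum of the `D_{kπ/N}` into `ω^{km}` with `ω = e^{2πi/N}` a primitive `N`-th
root of unity, so summing over `k` gives `N` when `N ∣ m`, i.e. on `|0…0⟩` and `|1…1⟩`, and `0`
otherwise. The average of the `D_{kπ/N}` is therefore the population operator, which `X^{⊗N}` maps
to `χ`.
-/

open Matrix Finset Complex
open scoped Classical

namespace GHZ

abbrev Op (N : ℕ) := Matrix (Fin N → Fin 2) (Fin N → Fin 2) ℂ

/-- all-zeros bitstring -/
def allZeros (N : ℕ) : Fin N → Fin 2 := fun _ => 0
/-- all-ones bitstring -/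
def allOnes (N : ℕ) : Fin N → Fin 2 := fun _ => 1

/-- |x⟩⟨y| -/
noncomputable def ketbra {N : ℕ} (x y : Fin N → Fin 2) : Op N := Matrix.single x y 1

/-- Pauli Z on qubit i -/
noncomputable def Zop {N : ℕ} (i : Fin N) : Op N :=
  Matrix.diagonal fun x => if x i = 0 then 1 else -1

/-- ∏_{i ∈ S} Z_i : the Z-type Pauli operator supported on S -/
noncomputable def ZS {N : ℕ} (S : Finset (Fin N)) : Op N :=
  Matrix.diagonal fun x => ∏ i ∈ S, (if x i = 0 then (1 : ℂ) else -1)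

/-- X^{⊗N} -/
noncomputable def XN (N : ℕ) : Op N :=
  Matrix.of fun x y => if (∀ i, y i = x i + 1) then (1 : ℂ) else 0

def Xmat : Matrix (Fin 2) (Fin 2) ℂ := !![0, 1; 1, 0]
def Ymat : Matrix (Fin 2) (Fin 2) ℂ := !![0, -Complex.I; Complex.I, 0]
def Zmat : Matrix (Fin 2) (Fin 2) ℂ := !![1, 0; 0, -1]

/-- a single-qubit operator M acting on qubit j of an N-qubit register -/
noncomputable def opOn {N : ℕ} (j : Fin N) (M : Matrix (Fin 2) (Fin 2) ℂ) : Op N :=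
  Matrix.of fun x y => if ∀ i, i ≠ j → x i = y i then M (x j) (y j) else 0

/-- the GHZ state vector (|0…0⟩ + |1…1⟩)/√2 -/
noncomputable def ghzVec (N : ℕ) : (Fin N → Fin 2) → ℂ :=
  fun x => if x = allZeros N ∨ x = allOnes N then ((Real.sqrt 2 : ℂ))⁻¹ else 0

/-- coherence operator |0…0⟩⟨1…1| + |1…1⟩⟨0…0| -/
noncomputable def chi (N : ℕ) : Op N :=
  ketbra (allZeros N) (allOnes N) + ketbra (allOnes N) (allZeros N)

/-- population operator |0…0⟩⟨0…0| + |1…1⟩⟨1…1| -/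
noncomputable def popOp (N : ℕ) : Op N :=
  ketbra (allZeros N) (allZeros N) + ketbra (allOnes N) (allOnes N)

/-- M_φ = ∏_j (cos φ X_j + sin φ Y_j) -/
noncomputable def Mop (N : ℕ) (φ : ℝ) : Op N :=
  (List.ofFn fun j : Fin N =>
    opOn j ((Real.cos φ : ℂ) • Xmat + (Real.sin φ : ℂ) • Ymat)).prod

/-- (e^{iφ}|0⟩⟨0| + e^{-iφ}|1⟩⟨1|)^{⊗N} -/
noncomputable def Dop (N : ℕ) (φ : ℝ) : Op N :=
  Matrix.diagonal fun x => ∏ i : Fin N,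
    (if x i = 0 then Complex.exp (Complex.I * φ) else Complex.exp (-Complex.I * φ))

end GHZ


namespace Matrix

variable {ι κ R : Type*} [Fintype ι] [DecidableEq ι] [Fintype κ] [DecidableEq κ] [CommSemiring R]

def piKronecker : (ι → Matrix κ κ R) →* Matrix (ι → κ) (ι → κ) R where
  toFun A := of fun x y => ∏ i, A i (x i) (y i)
  map_one' := by
    ext x y
    simp [one_apply, Finset.prod_boole, funext_iff]
  map_mul' A B := by
    ext x y
    simp only [of_apply, Pi.mul_apply, mul_apply, Fintype.prod_sum, Finset.prod_mul_distrib]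

@[simp]
theorem piKronecker_apply (A : ι → Matrix κ κ R) (x y : ι → κ) :
    piKronecker A x y = ∏ i, A i (x i) (y i) :=
  rfl

theorem piKronecker_diagonal (d : ι → κ → R) :
    piKronecker (fun i => diagonal (d i)) = diagonal fun x => ∏ i, d i (x i) := by
  ext x y
  simp [diagonal_apply, Finset.prod_ite_zero, funext_iff]

end Matrix

theorem List.prod_ofFn_mulSingle {n : ℕ} {M : Fin n → Type*} [∀ i, Monoid (M i)]
    (f : ∀ i, M i) : (List.ofFn fun j => Pi.mulSingle j (f j)).prod = f := by
  rw [List.ofFn_eq_map, ← Finset.noncommProd_toFinset _ _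
    (fun i _ j _ _ => Pi.mulSingle_apply_commute f i j) (List.nodup_finRange n)]
  simpa [List.toFinset_finRange] using Finset.noncommProd_mulSingle f

theorem IsPrimitiveRoot.sum_Icc_pow_pow {R : Type*} [CommRing R] [IsDomain R] {ζ : R} {N : ℕ}
    (hζ : IsPrimitiveRoot ζ N) (m : ℕ) :
    ∑ k ∈ Icc 1 N, (ζ ^ m) ^ k = if N ∣ m then (N : R) else 0 := by
  split_ifs with hdvd
  · simp [(hζ.pow_eq_one_iff_dvd m).mpr hdvd]
  · have hne : ζ ^ m - 1 ≠ 0 := sub_ne_zero.mpr fun h => hdvd ((hζ.pow_eq_one_iff_dvd m).mp h)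
    have hgeom := geom_sum_Ico_mul (ζ ^ m) (Nat.le_add_left 1 N)
    rw [Finset.Ico_add_one_right_eq_Icc, pow_succ, pow_right_comm, hζ.pow_eq_one, one_pow,
      one_mul, pow_one, sub_self] at hgeom
    exact (mul_eq_zero.mp hgeom).resolve_right hne

namespace GHZ

theorem opOn_eq_piKronecker {N : ℕ} (j : Fin N) (M : Matrix (Fin 2) (Fin 2) ℂ) :
    opOn j M = piKronecker (Pi.mulSingle j M) := by
  ext x y
  have hrest : ∏ i ∈ {j}ᶜ, (Pi.mulSingle j M : Fin N → Matrix (Fin 2) (Fin 2) ℂ) i (x i) (y i)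
      = ∏ i ∈ {j}ᶜ, (1 : Matrix (Fin 2) (Fin 2) ℂ) (x i) (y i) :=
    Finset.prod_congr rfl fun i hi => by rw [Pi.mulSingle_eq_of_ne (by simpa using hi)]
  rw [piKronecker_apply, Fintype.prod_eq_mul_prod_compl j, hrest]
  simp [opOn, one_apply, Finset.prod_boole]

theorem Mop_eq_piKronecker (N : ℕ) (φ : ℝ) :
    Mop N φ = piKronecker fun _ => (Real.cos φ : ℂ) • Xmat + (Real.sin φ : ℂ) • Ymat := by
  rw [Mop, ← List.prod_ofFn_mulSingle fun _ : Fin N =>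
    (Real.cos φ : ℂ) • Xmat + (Real.sin φ : ℂ) • Ymat, map_list_prod, List.map_ofFn]
  simp_rw [opOn_eq_piKronecker]
  rfl

theorem XN_eq_piKronecker (N : ℕ) : XN N = piKronecker fun _ => Xmat := by
  have hX : ∀ a b : Fin 2, Xmat a b = if b = a + 1 then 1 else 0 := by
    intro a b
    fin_cases a <;> fin_cases b <;> simp [Xmat]
  ext x y
  simp [XN, hX, Finset.prod_boole]

theorem Dop_eq_piKronecker (N : ℕ) (φ : ℝ) :
    Dop N φ = piKronecker fun _ =>
      diagonal fun b => if b = 0 then exp (I * φ) else exp (-I * φ) := by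
  rw [piKronecker_diagonal, Dop]

theorem cos_smul_Xmat_add_sin_smul_Ymat (φ : ℝ) :
    (Real.cos φ : ℂ) • Xmat + (Real.sin φ : ℂ) • Ymat
      = Xmat * diagonal fun b => if b = 0 then exp (I * φ) else exp (-I * φ) := by
  have hpos : exp (I * φ) = Real.cos φ + Real.sin φ * I := by
    rw [mul_comm, exp_mul_I, ← ofReal_cos, ← ofReal_sin]
  have hneg : exp (-(I * φ)) = Real.cos φ - Real.sin φ * I := by
    rw [mul_comm, ← neg_mul, exp_mul_I, cos_neg, sin_neg, ← ofReal_cos, ← ofReal_sin]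
    ring
  ext a b
  fin_cases a <;> fin_cases b <;> simp [Xmat, Ymat, hpos, hneg]
  ring

theorem Mop_eq_XN_mul_Dop (N : ℕ) (φ : ℝ) : Mop N φ = XN N * Dop N φ := by
  rw [Mop_eq_piKronecker, cos_smul_Xmat_add_sin_smul_Ymat, XN_eq_piKronecker, Dop_eq_piKronecker,
    ← map_mul]
  rfl

theorem neg_one_pow_mul_prod_exp {N : ℕ} (hN : N ≠ 0) (k : ℕ) (x : Fin N → Fin 2) :
    (-1 : ℂ) ^ k * ∏ i, (if x i = 0 then exp (I * ↑(k * Real.pi / N : ℝ))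
        else exp (-I * ↑(k * Real.pi / N : ℝ)))
      = (exp (2 * Real.pi * I / N) ^ #{i | x i = 0}) ^ k := by
  set θ := exp (I * ↑(k * Real.pi / N : ℝ))
  -- `(-1)^k = θ^N` hands one factor `θ` to each qubit:
  -- `θ · θ = ω^k` on a `0` and `θ · θ⁻¹ = 1` on a `1`.
  have hθN : θ ^ N = (-1) ^ k := by
    rw [← exp_nat_mul, ← exp_pi_mul_I, ← exp_nat_mul]
    congr 1
    push_cast
    field_simp
  have hθ_mul_inv : θ * exp (-I * ↑(k * Real.pi / N : ℝ)) = 1 := by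
    rw [← exp_add]
    simp
  have hθ_sq : θ * θ = exp (2 * Real.pi * I / N) ^ k := by
    rw [← exp_add, ← exp_nat_mul]
    congr 1
    push_cast
    ring
  rw [← hθN, ← Fin.prod_const, ← Finset.prod_mul_distrib]
  simp_rw [mul_ite, hθ_mul_inv, hθ_sq]
  rw [Finset.prod_ite, prod_const, prod_const_one, mul_one, pow_right_comm]

theorem dvd_card_filter_eq_zero_iff {N : ℕ} (x : Fin N → Fin 2) :
    N ∣ #{i | x i = 0} ↔ x = allOnes N ∨ x = allZeros N := by
  have hle : #{i | x i = 0} ≤ N := (card_filter_le _ _).trans_eq (card_fin N)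
  have hdvd : N ∣ #{i | x i = 0} ↔ #{i | x i = 0} = 0 ∨ #{i | x i = 0} = N :=
    ⟨fun h => hle.lt_or_eq.imp_left (Nat.eq_zero_of_dvd_of_lt h), by rintro (h | h) <;> simp [h]⟩
  have hall := card_filter_eq_iff (s := univ) (p := fun i => x i = 0)
  rw [card_univ, Fintype.card_fin] at hall
  have hone : ∀ b : Fin 2, ¬b = 0 ↔ b = 1 := by decide
  rw [hdvd, card_filter_eq_zero_iff, hall]
  simp [funext_iff, allOnes, allZeros, hone]

theorem allZeros_ne_allOnes {N : ℕ} (hN : N ≠ 0) : allZeros N ≠ allOnes N := fun h => by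
  simpa [allZeros, allOnes] using congrFun h ⟨0, Nat.pos_of_ne_zero hN⟩

theorem popOp_eq_diagonal {N : ℕ} (hN : N ≠ 0) :
    popOp N = diagonal fun x => if x = allOnes N ∨ x = allZeros N then 1 else 0 := by
  rw [popOp, ketbra, ketbra, ← diagonal_single, ← diagonal_single, diagonal_add]
  congr 1
  funext x
  rcases eq_or_ne x (allOnes N) with rfl | h1
  · simp [(allZeros_ne_allOnes hN).symm]
  rcases eq_or_ne x (allZeros N) with rfl | h0
  · simp [allZeros_ne_allOnes hN]
  · simp [h0, h1]

theorem sum_neg_one_pow_smul_Dop {N : ℕ} (hN : N ≠ 0) :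
    ∑ k ∈ Icc 1 N, (-1 : ℂ) ^ k • Dop N (k * Real.pi / N) = (N : ℂ) • popOp N := by
  rw [popOp_eq_diagonal hN, ← diagonal_smul]
  ext x y
  rcases eq_or_ne x y with rfl | hxy
  · simp only [Matrix.sum_apply, Matrix.smul_apply, Dop, diagonal_apply_eq, smul_eq_mul,
      neg_one_pow_mul_prod_exp hN, (isPrimitiveRoot_exp N hN).sum_Icc_pow_pow,
      dvd_card_filter_eq_zero_iff, Pi.smul_apply, mul_ite, mul_one, mul_zero]
  · simp [Matrix.sum_apply, Dop, diagonal_apply_ne _ hxy]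

theorem XN_mul_ketbra {N : ℕ} (a b : Fin N → Fin 2) :
    XN N * ketbra a b = ketbra (fun i => a i + 1) b := by
  have hflip : ∀ u v : Fin 2, v = u + 1 ↔ u = v + 1 := by decide
  ext x y
  rcases eq_or_ne y b with rfl | hy
  · simp [ketbra, mul_single_apply_same, XN, single_apply, funext_iff, hflip, eq_comm]
  · simp [ketbra, mul_single_apply_of_ne (hbj := hy), hy.symm]

theorem XN_mul_popOp (N : ℕ) : XN N * popOp N = chi N := by
  rw [popOp, mul_add, XN_mul_ketbra, XN_mul_ketbra, chi, add_comm]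
  rfl

end GHZ

open GHZ in
/-- (1/N) ∑_{k=1}^N (-1)^k M_{kπ/N} = χ. -/
theorem alternating_Mop_average_eq_coherence (N : ℕ) (hN : 1 ≤ N) :
    ((N : ℂ))⁻¹ • ∑ k ∈ Finset.Icc 1 N, ((-1 : ℂ)) ^ k • Mop N (k * Real.pi / N)
      = chi N := by
  have hN₀ : N ≠ 0 := Nat.one_le_iff_ne_zero.mp hN
  simp_rw [Mop_eq_XN_mul_Dop, ← mul_smul_comm, ← Matrix.mul_sum, sum_neg_one_pow_smul_Dop hN₀,
    mul_smul_comm, smul_smul, inv_mul_cancel₀ (Nat.cast_ne_zero.mpr hN₀ : (N : ℂ) ≠ 0), one_smul,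
    XN_mul_popOp]
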